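/- arXiv:1108.4606 — 2 statements merged into one kernel-verified Lean document; each statement's English description precedes it below -/
import Mathlib

section
/- Let G be a capacitated domination instance and let f be a feasible demand assignment. Then there exists a feasible demand assignment f' with w(f') ≤ w(f) such that d(v)·x_{f'}(u) ≥ f'(v,u) for every u ∈ V and every v ∈ N[u]. In particular, there exists a minimum-cost feasible demand assignment f satisfying d(v)·x_f(u) ≥ f(v,u) for all u ∈ V and v ∈ N[u]. -/
open Finset

variable {V : Type*} [Fintype V] [DecidableEq V]

/-- The closed neighborhood `N[v]` of a vertex. -/
def closedNbhd (G : SimpleGraph V) [DecidableRel G.Adj] (v : V) : Finset V :=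
  insert v (G.neighborFinset v)

/-- A demand assignment: nonnegative, supported on closed neighborhoods. -/
def IsAssignment (G : SimpleGraph V) [DecidableRel G.Adj] (f : V → V → ℝ) : Prop :=
  (∀ u v, 0 ≤ f u v) ∧ ∀ u v, v ∉ closedNbhd G u → f u v = 0

/-- Feasibility: the demand of every vertex is fully assigned. -/
def Feasible (G : SimpleGraph V) [DecidableRel G.Adj] (d : V → ℝ) (f : V → V → ℝ) : Prop :=
  IsAssignment G f ∧ ∀ u, d u ≤ ∑ v ∈ closedNbhd G u, f u v

/-- Multiplicity `x_f(v) = ⌈(Σ_{u∈N[v]} f(u,v))/c(v)⌉`. -/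
noncomputable def mult (G : SimpleGraph V) [DecidableRel G.Adj] (c : V → ℝ)
    (f : V → V → ℝ) (v : V) : ℤ :=
  ⌈(∑ u ∈ closedNbhd G v, f u v) / c v⌉

/-- Cost of a demand assignment. -/
noncomputable def cost (G : SimpleGraph V) [DecidableRel G.Adj] (w c : V → ℝ)
    (f : V → V → ℝ) : ℝ :=
  ∑ v, w v * (mult G c f v : ℝ)

/-- Optimal cost of a feasible demand assignment. -/
noncomputable def OPT (G : SimpleGraph V) [DecidableRel G.Adj] (w c d : V → ℝ) : ℝ :=
  sInf {r | ∃ f, Feasible G d f ∧ cost G w c f = r}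

/-- Feasibility for the LP relaxation of capacitated domination. -/
def LPFeasible (G : SimpleGraph V) [DecidableRel G.Adj] (c d : V → ℝ)
    (x : V → ℝ) (f : V → V → ℝ) : Prop :=
  (∀ u, 0 ≤ x u) ∧ IsAssignment G f ∧
  (∀ u, d u ≤ ∑ v ∈ closedNbhd G u, f u v) ∧
  (∀ u, ∑ v ∈ closedNbhd G u, f v u ≤ c u * x u) ∧
  (∀ u, ∀ v ∈ closedNbhd G u, f v u ≤ d v * x u)

/-- Optimal value `OPT_f(G)` of the LP relaxation. -/
noncomputable def OPTf (G : SimpleGraph V) [DecidableRel G.Adj] (w c d : V → ℝ) : ℝ :=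
  sInf {r | ∃ x f, LPFeasible G c d x f ∧ ∑ u, w u * x u = r}

lemma closedNbhd_comm (G : SimpleGraph V) [DecidableRel G.Adj] {u v : V}
    (h : v ∈ closedNbhd G u) : u ∈ closedNbhd G v := by
  simp only [closedNbhd, Finset.mem_insert, SimpleGraph.mem_neighborFinset] at h ⊢
  rcases h with h | h
  · exact Or.inl h.symm
  · exact Or.inr h.symm

lemma mult_nonneg' (G : SimpleGraph V) [DecidableRel G.Adj] (c : V → ℝ)
    (hc : ∀ v, 0 < c v) {f : V → V → ℝ} (hf : ∀ u v, 0 ≤ f u v) (v : V) :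
    0 ≤ mult G c f v :=
  Int.ceil_nonneg (div_nonneg (Finset.sum_nonneg fun u _ => hf u v) (hc v).le)

lemma mult_mono' (G : SimpleGraph V) [DecidableRel G.Adj] (c : V → ℝ)
    (hc : ∀ v, 0 < c v) {f g : V → V → ℝ} (h : ∀ u v, g u v ≤ f u v) (v : V) :
    mult G c g v ≤ mult G c f v := by
  apply Int.ceil_le_ceil
  exact div_le_div_of_nonneg_right (Finset.sum_le_sum fun u _ => h u v) (hc v).le

lemma cost_mono' (G : SimpleGraph V) [DecidableRel G.Adj] (w c : V → ℝ)
    (hw : ∀ v, 0 ≤ w v) (hc : ∀ v, 0 < c v) {f g : V → V → ℝ}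
    (h : ∀ u v, g u v ≤ f u v) : cost G w c g ≤ cost G w c f := by
  apply Finset.sum_le_sum
  intro v _
  exact mul_le_mul_of_nonneg_left (by exact_mod_cast mult_mono' G c hc h v) (hw v)

lemma good_prop' (G : SimpleGraph V) [DecidableRel G.Adj] (c d : V → ℝ)
    (hc : ∀ v, 0 < c v) (hd : ∀ v, 0 ≤ d v) {g : V → V → ℝ}
    (hg0 : ∀ u v, 0 ≤ g u v) (hgd : ∀ v u, g v u ≤ d v) :
    ∀ u, ∀ v ∈ closedNbhd G u, g v u ≤ d v * (mult G c g u : ℝ) := by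
  intro u v hv
  rcases eq_or_lt_of_le (hg0 v u) with h0 | hpos
  · rw [← h0]
    exact mul_nonneg (hd v) (by exact_mod_cast mult_nonneg' G c hc hg0 u)
  · have hload : 0 < ∑ x ∈ closedNbhd G u, g x u :=
      lt_of_lt_of_le hpos (Finset.single_le_sum (fun x _ => hg0 x u) hv)
    have h1 : (1 : ℤ) ≤ mult G c g u := by
      have : 0 < mult G c g u := Int.ceil_pos.mpr (div_pos hload (hc u))
      omega
    calc g v u ≤ d v := hgd v u
      _ ≤ d v * (mult G c g u : ℝ) :=
        le_mul_of_one_le_right (hd v) (by exact_mod_cast h1)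

lemma normalize' (G : SimpleGraph V) [DecidableRel G.Adj] (d : V → ℝ)
    (hd : ∀ v, 0 ≤ d v) {f : V → V → ℝ} (hf : Feasible G d f) :
    ∃ g, Feasible G d g ∧ (∀ v u, g v u ≤ d v) ∧ (∀ v u, g v u ≤ f v u) := by
  obtain ⟨⟨hf0, hfs⟩, hfd⟩ := hf
  set S : V → ℝ := fun v => ∑ u ∈ closedNbhd G v, f v u with hS
  have hS0 : ∀ v, 0 ≤ S v := fun v => Finset.sum_nonneg fun u _ => hf0 v u
  have hdS : ∀ v, d v ≤ S v := hfd
  have hfle : ∀ v u, f v u ≤ S v := by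
    intro v u
    by_cases h : u ∈ closedNbhd G v
    · exact Finset.single_le_sum (fun x _ => hf0 v x) h
    · rw [hfs v u h]; exact hS0 v
  refine ⟨fun v u => d v / S v * f v u, ⟨⟨?_, ?_⟩, ?_⟩, ?_, ?_⟩
  · intro v u
    exact mul_nonneg (div_nonneg (hd v) (hS0 v)) (hf0 v u)
  · intro v u h
    dsimp only
    rw [hfs v u h, mul_zero]
  · intro v
    rw [← Finset.mul_sum]
    rcases eq_or_lt_of_le (hS0 v) with h0 | hpos
    · have : d v = 0 := le_antisymm ((hdS v).trans h0.symm.le) (hd v)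
      simp [this]
    · rw [div_mul_cancel₀ _ hpos.ne']
  · intro v u
    calc d v / S v * f v u ≤ d v / S v * S v :=
          mul_le_mul_of_nonneg_left (hfle v u) (div_nonneg (hd v) (hS0 v))
      _ ≤ d v := by
          rcases eq_or_lt_of_le (hS0 v) with h0 | hpos
          · rw [← h0, mul_zero]; exact hd v
          · rw [div_mul_cancel₀ _ hpos.ne']
  · intro v u
    calc d v / S v * f v u ≤ 1 * f v u := by
          apply mul_le_mul_of_nonneg_right _ (hf0 v u)
          rcases eq_or_lt_of_le (hS0 v) with h0 | hpos
          · rw [← h0, div_zero]; exact zero_le_one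
          · exact (div_le_one hpos).mpr (hdS v)
      _ = f v u := one_mul _

/-- any feasible demand assignment can be turned into one of no
larger cost satisfying `d(v)·x_f(u) ≥ f(v,u)`; in particular some minimum-cost
feasible demand assignment satisfies this. -/
theorem exists_good_assignment (G : SimpleGraph V) [DecidableRel G.Adj]
    (w c d : V → ℝ) (hw : ∀ v, 0 ≤ w v) (hc : ∀ v, 0 < c v) (hd : ∀ v, 0 ≤ d v)
    (f : V → V → ℝ) (hf : Feasible G d f) :
    (∃ f', Feasible G d f' ∧ cost G w c f' ≤ cost G w c f ∧
      ∀ u, ∀ v ∈ closedNbhd G u, f' v u ≤ d v * (mult G c f' u : ℝ)) ∧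
    (∃ f₀, Feasible G d f₀ ∧ cost G w c f₀ = OPT G w c d ∧
      ∀ u, ∀ v ∈ closedNbhd G u, f₀ v u ≤ d v * (mult G c f₀ u : ℝ)) := by
  obtain ⟨g, hgF, hgd, hgf⟩ := normalize' G d hd hf
  have hg0 := hgF.1.1
  have hgood : ∀ u, ∀ v ∈ closedNbhd G u, g v u ≤ d v * (mult G c g u : ℝ) :=
    good_prop' G c d hc hd hg0 hgd
  have hcostg : cost G w c g ≤ cost G w c f := cost_mono' G w c hw hc hgf
  refine ⟨⟨g, hgF, hcostg, hgood⟩, ?_⟩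
  set Sset : Set ℝ := {r | ∃ f', Feasible G d f' ∧ cost G w c f' = r} with hSset
  have hOPT : OPT G w c d = sInf Sset := rfl
  set T : Set ℝ :=
    {r | ∃ g', Feasible G d g' ∧ (∀ v u, g' v u ≤ d v) ∧ cost G w c g' = r} with hTdef
  have hTS : T ⊆ Sset := by rintro r ⟨g', h1, _, h3⟩; exact ⟨g', h1, h3⟩
  have hTne : T.Nonempty := ⟨cost G w c g, g, hgF, hgd, rfl⟩
  have hcost0 : ∀ f', Feasible G d f' → 0 ≤ cost G w c f' := by
    intro f' hf'
    apply Finset.sum_nonneg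
    intro v _
    exact mul_nonneg (hw v) (by exact_mod_cast mult_nonneg' G c hc hf'.1.1 v)
  have hbdd : BddBelow Sset := ⟨0, by rintro r ⟨f', h1, rfl⟩; exact hcost0 f' h1⟩
  set D : ℝ := ∑ x, d x with hD
  have hTfin : T.Finite := by
    have hsub : T ⊆ (fun n : V → ℤ => ∑ v, w v * (n v : ℝ)) ''
        (Set.univ.pi fun v => Set.Icc (0 : ℤ) ⌈D / c v⌉) := by
      rintro r ⟨g', hg'F, hg'd, hcg'⟩
      refine ⟨mult G c g', ?_, by rw [← hcg']; rfl⟩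
      intro v _
      constructor
      · exact mult_nonneg' G c hc hg'F.1.1 v
      · apply Int.ceil_le_ceil
        apply div_le_div_of_nonneg_right _ (hc v).le
        calc ∑ u ∈ closedNbhd G v, g' u v ≤ ∑ u ∈ closedNbhd G v, d u :=
              Finset.sum_le_sum fun u _ => hg'd u v
          _ ≤ D := Finset.sum_le_sum_of_subset_of_nonneg (Finset.subset_univ _)
              (fun u _ _ => hd u)
    exact ((Set.Finite.pi fun v => Set.finite_Icc _ _).image _).subset hsub
  have hInfT : sInf T ∈ T := hTne.csInf_mem hTfin
  have hle1 : sInf Sset ≤ sInf T := csInf_le_csInf hbdd hTne hTS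
  have hle2 : sInf T ≤ sInf Sset := by
    refine le_csInf ⟨cost G w c f, f, hf, rfl⟩ ?_
    rintro r ⟨f', hf', rfl⟩
    obtain ⟨g', hg'F, hg'd, hg'f⟩ := normalize' G d hd hf'
    calc sInf T ≤ cost G w c g' := csInf_le hTfin.bddBelow ⟨g', hg'F, hg'd, rfl⟩
      _ ≤ cost G w c f' := cost_mono' G w c hw hc hg'f
  obtain ⟨f₀, hF₀, hd₀, hc₀⟩ := hInfT
  exact ⟨f₀, hF₀, by rw [hc₀, hOPT]; exact le_antisymm hle2 hle1,
    good_prop' G c d hc hd hF₀.1.1 hd₀⟩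
end

section
/- For every real α > 1 and every integer n ≥ 2, the linear program obtained from the LP relaxation of capacitated domination on the star T(α) by omitting the constraints d(v)x(u) ≥ f(v,u) admits a feasible solution of objective value 1/α; hence its optimal value is at most 1/α. -/
open Finset

variable {V : Type*} [Fintype V] [DecidableEq V]

/-- The `n`-vertex star with center `ctr`. -/
def starGraph (n : ℕ) (ctr : Fin n) : SimpleGraph (Fin n) where
  Adj u v := u ≠ v ∧ (u = ctr ∨ v = ctr)
  symm := ⟨fun u v h => ⟨h.1.symm, h.2.symm⟩⟩
  loopless := ⟨fun u h => h.1 rfl⟩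

instance (n : ℕ) (ctr : Fin n) : DecidableRel (starGraph n ctr).Adj :=
  fun u v => inferInstanceAs (Decidable (u ≠ v ∧ (u = ctr ∨ v = ctr)))

/-- Feasibility for the LP relaxation of capacitated domination WITHOUT the
constraints `d(v)x(u) ≥ f(v,u)`. -/
def RelaxedLPFeasible {V : Type*} [Fintype V] [DecidableEq V]
    (G : SimpleGraph V) [DecidableRel G.Adj] (c d : V → ℝ)
    (x : V → ℝ) (f : V → V → ℝ) : Prop :=
  (∀ u, 0 ≤ x u) ∧ IsAssignment G f ∧
  (∀ u, d u ≤ ∑ v ∈ closedNbhd G u, f u v) ∧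
  (∀ u, ∑ v ∈ closedNbhd G u, f v u ≤ c u * x u)

/-! Send `1/(n-1)` of the center's demand to each petal, let every petal serve its own demand,
and open every petal to the fraction `1/(α(n-1))`, the center not at all. A petal then receives
`1 + 1/(n-1) = n/(n-1)` units, which is exactly its capacity `αn` times its opening, and the total
opening is `(n-1)/(α(n-1)) = 1/α`. Only the omitted constraint `x(p) ≥ f(p,p) = 1` would forbid
this solution. -/

lemma Fintype.sum_ite_eq_add_card_sub_one_mul {ι : Type*} [Fintype ι] [DecidableEq ι]
    (i : ι) (a b : ℝ) :
    ∑ j, (if j = i then a else b) = a + (Fintype.card ι - 1) * b := by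
  rw [← Finset.add_sum_erase _ _ (mem_univ i), if_pos rfl,
    Finset.sum_congr rfl fun j hj => if_neg (Finset.ne_of_mem_erase hj), sum_const,
    card_erase_of_mem (mem_univ i), nsmul_eq_mul, card_univ,
    Nat.cast_sub (Fintype.card_pos_iff.2 ⟨i⟩), Nat.cast_one]

lemma relaxedLP_sInf_le {V : Type*} [Fintype V] [DecidableEq V] {G : SimpleGraph V}
    [DecidableRel G.Adj] {w c d x : V → ℝ} {f : V → V → ℝ} (hw : ∀ u, 0 ≤ w u)
    (hfeas : RelaxedLPFeasible G c d x f) :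
    sInf {r | ∃ x f, RelaxedLPFeasible G c d x f ∧ ∑ u, w u * x u = r} ≤ ∑ u, w u * x u := by
  refine csInf_le ⟨0, ?_⟩ ⟨x, f, hfeas, rfl⟩
  rintro _ ⟨x', f', hfeas', rfl⟩
  exact sum_nonneg fun u _ => mul_nonneg (hw u) (hfeas'.1 u)

namespace starGraph

variable {n : ℕ} (ctr : Fin n)

@[simp]
lemma adj_iff {u v : Fin n} : (starGraph n ctr).Adj u v ↔ u ≠ v ∧ (u = ctr ∨ v = ctr) := Iff.rfl

lemma closedNbhd_center : closedNbhd (starGraph n ctr) ctr = univ := by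
  ext v
  by_cases h : v = ctr <;> simp [closedNbhd, h, Ne.symm]

lemma closedNbhd_of_ne {p : Fin n} (hp : p ≠ ctr) :
    closedNbhd (starGraph n ctr) p = {p, ctr} := by
  ext v
  by_cases h : v = p
  · simp [closedNbhd, h, hp]
  · simp only [closedNbhd, mem_insert, mem_singleton, SimpleGraph.mem_neighborFinset, adj_iff, h]
    grind

noncomputable def lpOpening (α : ℝ) (u : Fin n) : ℝ :=
  if u = ctr then 0 else 1 / (α * (n - 1))

noncomputable def lpAssignment (u v : Fin n) : ℝ :=
  if u = ctr then (if v = ctr then 0 else 1 / (n - 1)) else if v = u then 1 else 0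

lemma sum_lpOpening {α : ℝ} (hn : (1 : ℝ) < n) : ∑ u, lpOpening ctr α u = 1 / α := by
  simp only [lpOpening]
  rw [Fintype.sum_ite_eq_add_card_sub_one_mul, Fintype.card_fin]
  field_simp [(sub_pos.2 hn).ne']
  simp

lemma lpAssignment_center_right (v : Fin n) : lpAssignment ctr v ctr = 0 := by
  by_cases h : v = ctr <;> simp [lpAssignment, h, Ne.symm]

lemma relaxedLPFeasible_lpOpening {α : ℝ} (hα : 0 < α) (hn : (1 : ℝ) < n) :
    RelaxedLPFeasible (starGraph n ctr) (fun v => if v = ctr then (n : ℝ) else α * n)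
      (fun _ => 1) (lpOpening ctr α) (lpAssignment ctr) := by
  have hn₁ : (0 : ℝ) < n - 1 := sub_pos.2 hn
  refine ⟨fun u => ?_, ⟨fun u v => ?_, fun u v hv => ?_⟩, fun u => ?_, fun u => ?_⟩
  · unfold lpOpening; split_ifs <;> positivity
  · unfold lpAssignment; split_ifs <;> positivity
  · by_cases hu : u = ctr
    · subst hu; simp [closedNbhd_center] at hv
    · have hvu : v ≠ u := by rintro rfl; simp [closedNbhd_of_ne ctr hu] at hv
      simp [lpAssignment, hu, hvu]
  · by_cases hu : u = ctr
    · subst u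
      have : ∑ v, lpAssignment ctr ctr v = (n - 1) * (1 / (n - 1)) := by
        simpa [lpAssignment] using Fintype.sum_ite_eq_add_card_sub_one_mul ctr 0 (1 / (n - 1 : ℝ))
      rw [closedNbhd_center, this, mul_one_div_cancel hn₁.ne']
    · simp [closedNbhd_of_ne ctr hu, sum_pair hu, lpAssignment, hu, Ne.symm hu]
  · by_cases hu : u = ctr
    · subst u
      simp [closedNbhd_center, lpAssignment_center_right, lpOpening]
    · rw [closedNbhd_of_ne ctr hu, sum_pair hu]
      simp only [lpAssignment, lpOpening, hu, if_true, if_false]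
      field_simp
      linarith

end starGraph

/-- on the star `T(α)` (unit costs and demands, capacity `n` at the
center and `αn` at the petals), the LP relaxation without the constraints
`d(v)x(u) ≥ f(v,u)` has a feasible solution of objective value `1/α`, hence
its optimal value is at most `1/α`. -/
theorem relaxedLP_value_on_star (α : ℝ) (hα : 1 < α) (n : ℕ) (hn : 2 ≤ n) :
    (∃ x f, RelaxedLPFeasible (starGraph n ⟨0, by omega⟩)
        (fun v => if v = ⟨0, by omega⟩ then (n : ℝ) else α * n) (fun _ => 1) x f ∧
        ∑ u, (1 : ℝ) * x u = 1 / α) ∧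
    sInf {r | ∃ x f, RelaxedLPFeasible (starGraph n ⟨0, by omega⟩)
        (fun v => if v = ⟨0, by omega⟩ then (n : ℝ) else α * n) (fun _ => 1) x f ∧
        ∑ u, (1 : ℝ) * x u = r} ≤ 1 / α := by
  have hn' : (1 : ℝ) < n := by exact_mod_cast hn
  have hfeas := starGraph.relaxedLPFeasible_lpOpening (⟨0, by omega⟩ : Fin n) (by linarith) hn'
  have hvalue : ∑ u, (1 : ℝ) * starGraph.lpOpening (⟨0, by omega⟩ : Fin n) α u = 1 / α := by
    simpa only [one_mul] using starGraph.sum_lpOpening _ hn'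
  exact ⟨⟨_, _, hfeas, hvalue⟩, hvalue ▸ relaxedLP_sInf_le (fun _ => zero_le_one) hfeas⟩
end
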